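/- One-step contraction inequality for MGD: with assumptions as in the main convergence theorem, for each iteration t, max_i ‖w_i^{t+1} - w_i*‖ ≤ (γ̄ + ασ)·max_i ‖w_i^t - w_i*‖ + 2ασ max_i ‖w_i*‖ + α max_i ‖∇f_i(w_i*)‖. -/

import Mathlib

/-!
One MGD step at node `i` splits as `(φ(w_i) - φ(w_i*)) + ασ Σ_j m_ij (w_j - w_j*)
+ ασ (Σ_j m_ij w_j* - w_i*) - α ∇f_i(w_i*)`, where `φ x = (1 - ασ) x - α ∇f_i x`.
The derivative of `φ` is the symmetric operator `(1 - ασ) I - α ∇²f_i`, whose quadratic form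
lies between `1 - ασ - α L_i` and `1 - ασ - α ξ_i`; by the Rayleigh-quotient formula for the norm
of a symmetric operator and the mean value inequality, `φ` is Lipschitz with constant
`max |1 - ασ - α ξ_i| |1 - ασ - α L_i| ≤ γ̄`. The averages `Σ_j m_ij (w_j - w_j*)` and
`Σ_j m_ij w_j*` are convex combinations, so they are bounded by `max_j ‖w_j - w_j*‖` and
`max_j ‖w_j*‖` respectively.
-/

open scoped RealInnerProductSpace

open InnerProductSpace

theorem ContDiff.differentiable_fderiv {𝕜 E F : Type*} [NontriviallyNormedField 𝕜]
    [NormedAddCommGroup E] [NormedSpace 𝕜 E] [NormedAddCommGroup F] [NormedSpace 𝕜 F]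
    {f : E → F} {n : WithTop ℕ∞} (hf : ContDiff 𝕜 n f) (hn : 2 ≤ n) :
    Differentiable 𝕜 (fderiv 𝕜 f) :=
  (hf.fderiv_right (m := 1) hn).differentiable one_ne_zero

section Gradient

variable {E : Type*} [NormedAddCommGroup E] [InnerProductSpace ℝ E]

theorem ContinuousLinearMap.opNorm_le_max_abs_of_inner_self_bounds (T : E →L[ℝ] E)
    (hT : (T : E →ₗ[ℝ] E).IsSymmetric) {a b : ℝ}
    (ha : ∀ v, a * ‖v‖ ^ 2 ≤ ⟪T v, v⟫) (hb : ∀ v, ⟪T v, v⟫ ≤ b * ‖v‖ ^ 2) :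
    ‖T‖ ≤ max |a| |b| := by
  rw [T.norm_eq_iSup_rayleighQuotient hT]
  refine ciSup_le fun v => ?_
  rw [rayleighQuotient, reApplyInnerSelf_apply, RCLike.re_to_real, abs_div, abs_sq]
  refine div_le_of_le_mul₀ (sq_nonneg _) (by positivity) (abs_le.2 ⟨?_, ?_⟩)
  · nlinarith [ha v, neg_abs_le a, le_max_left |a| |b|, sq_nonneg ‖v‖]
  · nlinarith [hb v, le_abs_self b, le_max_right |a| |b|, sq_nonneg ‖v‖]

variable [CompleteSpace E] {f : E → ℝ} {x : E}

/-- Over `ℝ` the conjugate-linear Riesz map `toDual` is linear. -/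
noncomputable def rieszEquiv : StrongDual ℝ E ≃ₗᵢ[ℝ] E := (toDual ℝ E).symm

theorem gradient_eq_rieszEquiv_comp_fderiv : gradient f = rieszEquiv ∘ fderiv ℝ f := rfl

theorem differentiableAt_gradient (hf : DifferentiableAt ℝ (fderiv ℝ f) x) :
    DifferentiableAt ℝ (gradient f) x := by
  rw [gradient_eq_rieszEquiv_comp_fderiv]
  exact rieszEquiv.differentiable.differentiableAt.comp x hf

theorem inner_fderiv_gradient_apply (v w : E) :
    ⟪fderiv ℝ (gradient f) x v, w⟫ = fderiv ℝ (fderiv ℝ f) x v w := by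
  rw [gradient_eq_rieszEquiv_comp_fderiv, rieszEquiv.comp_fderiv]
  exact toDual_symm_apply

theorem ContDiff.isSymmetric_fderiv_gradient (hf : ContDiff ℝ 2 f) (x : E) :
    (fderiv ℝ (gradient f) x : E →ₗ[ℝ] E).IsSymmetric := fun v w => by
  rw [ContinuousLinearMap.coe_coe, ← real_inner_comm v, inner_fderiv_gradient_apply,
    inner_fderiv_gradient_apply]
  exact second_derivative_symmetric (fun y => (hf.differentiable two_ne_zero y).hasFDerivAt)
    (hf.differentiable_fderiv le_rfl x).hasFDerivAt v w

theorem norm_gradient_step_sub_le (hf : ContDiff ℝ 2 f) {ξ L α c : ℝ} (hα : 0 ≤ α)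
    (hH : ∀ u v : E, ξ * ‖v‖ ^ 2 ≤ ⟪fderiv ℝ (gradient f) u v, v⟫ ∧
      ⟪fderiv ℝ (gradient f) u v, v⟫ ≤ L * ‖v‖ ^ 2)
    (u v : E) :
    ‖(c • u - α • gradient f u) - (c • v - α • gradient f v)‖ ≤
      max |c - α * ξ| |c - α * L| * ‖u - v‖ := by
  set H := fderiv ℝ (gradient f)
  have hderiv (x : E) :
      HasFDerivAt (fun y => c • y - α • gradient f y) (c • .id ℝ E - α • H x) x :=
    ((hasFDerivAt_id x).const_smul c).sub
      ((differentiableAt_gradient (hf.differentiable_fderiv le_rfl x)).hasFDerivAt.const_smul α)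
  have hnorm (x : E) : ‖c • .id ℝ E - α • H x‖ ≤ max |c - α * ξ| |c - α * L| := by
    rw [max_comm]
    refine ContinuousLinearMap.opNorm_le_max_abs_of_inner_self_bounds _ ?_ (fun p => ?_)
      (fun p => ?_)
    · exact (LinearMap.IsSymmetric.id.smul (conj_trivial c)).sub
        ((hf.isSymmetric_fderiv_gradient x).smul (conj_trivial α))
    all_goals
      simp only [sub_apply, smul_apply, ContinuousLinearMap.id_apply, inner_sub_left,
        real_inner_smul_left, real_inner_self_eq_norm_sq]
    · nlinarith [mul_le_mul_of_nonneg_left (hH x p).2 hα]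
    · nlinarith [mul_le_mul_of_nonneg_left (hH x p).1 hα]
  exact convex_univ.norm_image_sub_le_of_norm_hasFDerivWithin_le
    (fun x _ => (hderiv x).hasFDerivWithinAt) (fun x _ => hnorm x) (Set.mem_univ v)
    (Set.mem_univ u)

end Gradient

theorem norm_sum_smul_le_of_norm_le {E ι : Type*} [NormedAddCommGroup E] [NormedSpace ℝ E]
    {s : Finset ι} {w : ι → ℝ} {x : ι → E} {C : ℝ} (hw₀ : ∀ i ∈ s, 0 ≤ w i)
    (hw₁ : ∑ i ∈ s, w i = 1) (hx : ∀ i ∈ s, ‖x i‖ ≤ C) : ‖∑ i ∈ s, w i • x i‖ ≤ C := by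
  simpa using (convex_closedBall (0 : E) C).sum_mem hw₀ hw₁ (by simpa using hx)

theorem norm_mgd_step_sub_le {E ι : Type*} [NormedAddCommGroup E] [InnerProductSpace ℝ E]
    [CompleteSpace E] [Fintype ι] {f : E → ℝ} (hf : ContDiff ℝ 2 f) {ξ L α σ : ℝ}
    (hα : 0 ≤ α) (hσ : 0 ≤ σ)
    (hH : ∀ u v : E, ξ * ‖v‖ ^ 2 ≤ ⟪fderiv ℝ (gradient f) u v, v⟫ ∧
      ⟪fderiv ℝ (gradient f) u v, v⟫ ≤ L * ‖v‖ ^ 2)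
    {m : ι → ℝ} (hm₀ : ∀ j, 0 ≤ m j) (hm₁ : ∑ j, m j = 1) {x y : ι → E} {R S : ℝ}
    (hR : ∀ j, ‖x j - y j‖ ≤ R) (hS : ∀ j, ‖y j‖ ≤ S) (i : ι) :
    ‖(1 - α * σ) • x i + (α * σ) • (∑ j, m j • x j) - α • gradient f (x i) - y i‖ ≤
      max |1 - α * σ - α * ξ| |1 - α * σ - α * L| * ‖x i - y i‖ + α * σ * (R + 2 * S) +
        α * ‖gradient f (y i)‖ := by
  have hασ : 0 ≤ α * σ := mul_nonneg hα hσ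
  have hdev : ‖∑ j, m j • (x j - y j)‖ ≤ R :=
    norm_sum_smul_le_of_norm_le (fun j _ => hm₀ j) hm₁ (fun j _ => hR j)
  have hmean : ‖∑ j, m j • y j‖ ≤ S :=
    norm_sum_smul_le_of_norm_le (fun j _ => hm₀ j) hm₁ (fun j _ => hS j)
  have hstep := norm_gradient_step_sub_le (c := 1 - α * σ) hf hα hH (x i) (y i)
  calc _ = ‖((1 - α * σ) • x i - α • gradient f (x i)) - ((1 - α * σ) • y i - α • gradient f (y i))
          + (α * σ) • (∑ j, m j • (x j - y j) + (∑ j, m j • y j - y i))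
          - α • gradient f (y i)‖ := by
        simp only [smul_sub, Finset.sum_sub_distrib]
        congr 1
        module
    _ ≤ max |1 - α * σ - α * ξ| |1 - α * σ - α * L| * ‖x i - y i‖
          + α * σ * (‖∑ j, m j • (x j - y j)‖ + (‖∑ j, m j • y j‖ + ‖y i‖))
          + α * ‖gradient f (y i)‖ := by
        grw [norm_sub_le, norm_add_le, hstep, norm_smul_of_nonneg hασ, norm_smul_of_nonneg hα,
          norm_add_le, norm_sub_le (∑ j, m j • y j)]
    _ ≤ _ := by gcongr; linarith [hS i]

theorem stmt16_general {d T : ℕ}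
    (f : Fin T → EuclideanSpace ℝ (Fin d) → ℝ)
    (hC2 : ∀ i, ContDiff ℝ 2 (f i))
    (ξ L : Fin T → ℝ)
    (hbound : ∀ (i : Fin T) (u v : EuclideanSpace ℝ (Fin d)),
      ξ i * ‖v‖ ^ 2 ≤ ⟪(fderiv ℝ (gradient (f i)) u) v, v⟫ ∧
      ⟪(fderiv ℝ (gradient (f i)) u) v, v⟫ ≤ L i * ‖v‖ ^ 2)
    (wstar : Fin T → EuclideanSpace ℝ (Fin d))
    (m : ℕ → Fin T → Fin T → ℝ)
    (hm : ∀ t i j, 0 ≤ m t i j) (hrow : ∀ t i, ∑ j, m t i j = 1)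
    (σ α : ℝ) (hσ : 0 < σ) (hα0 : 0 < α)
    (hne : Finset.univ.Nonempty (α := Fin T))
    (w : ℕ → Fin T → EuclideanSpace ℝ (Fin d))
    (hiter : ∀ t i, w (t + 1) i =
      (1 - α * σ) • w t i + (α * σ) • (∑ j, m t i j • w t j) -
        α • gradient (f i) (w t i))
    (t : ℕ) :
    (Finset.univ.sup' hne fun i => ‖w (t + 1) i - wstar i‖) ≤
      ((Finset.univ.sup' hne fun i =>
          max |1 - α * σ - α * ξ i| |1 - α * σ - α * L i|) + α * σ) *
        (Finset.univ.sup' hne fun i => ‖w t i - wstar i‖) +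
      2 * α * σ * (Finset.univ.sup' hne fun i => ‖wstar i‖) +
      α * (Finset.univ.sup' hne fun i => ‖gradient (f i) (wstar i)‖) := by
  set Γ := Finset.univ.sup' hne fun i => max |1 - α * σ - α * ξ i| |1 - α * σ - α * L i|
  set W := Finset.univ.sup' hne fun i => ‖w t i - wstar i‖
  set S := Finset.univ.sup' hne fun i => ‖wstar i‖
  set G := Finset.univ.sup' hne fun i => ‖gradient (f i) (wstar i)‖
  refine Finset.sup'_le _ _ fun i _ => ?_
  have hΓ : max |1 - α * σ - α * ξ i| |1 - α * σ - α * L i| ≤ Γ :=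
    Finset.le_sup' (fun i => max |1 - α * σ - α * ξ i| |1 - α * σ - α * L i|) (Finset.mem_univ i)
  have hW (j : Fin T) : ‖w t j - wstar j‖ ≤ W :=
    Finset.le_sup' (fun j => ‖w t j - wstar j‖) (Finset.mem_univ j)
  have hS (j : Fin T) : ‖wstar j‖ ≤ S := Finset.le_sup' (fun j => ‖wstar j‖) (Finset.mem_univ j)
  have hG : ‖gradient (f i) (wstar i)‖ ≤ G :=
    Finset.le_sup' (fun i => ‖gradient (f i) (wstar i)‖) (Finset.mem_univ i)
  have hΓ₀ : 0 ≤ Γ := (le_max_of_le_left (abs_nonneg _)).trans hΓ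
  rw [hiter]
  calc _ ≤ _ := norm_mgd_step_sub_le (hC2 i) hα0.le hσ.le (hbound i) (hm t i) (hrow t i) hW hS i
    _ ≤ Γ * W + α * σ * (W + 2 * S) + α * G := by gcongr; exact hW i
    _ = _ := by ring

/-- one-step contraction for MGD: under the assumptions of the
main convergence theorem, each MGD step satisfies
`max_i ‖w_i^{t+1} - w_i*‖ ≤ (γ̄ + ασ) max_i ‖w_i^t - w_i*‖
   + 2ασ max_i ‖w_i*‖ + α max_i ‖∇f_i(w_i*)‖`. -/
theorem stmt16 {d T : ℕ} (hT : 0 < T)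
    (f : Fin T → EuclideanSpace ℝ (Fin d) → ℝ)
    (hC2 : ∀ i, ContDiff ℝ 2 (f i))
    (ξ L : Fin T → ℝ) (hξ : ∀ i, 0 < ξ i) (hξL : ∀ i, ξ i ≤ L i)
    (hbound : ∀ (i : Fin T) (u v : EuclideanSpace ℝ (Fin d)),
      ξ i * ‖v‖ ^ 2 ≤ ⟪(fderiv ℝ (gradient (f i)) u) v, v⟫ ∧
      ⟪(fderiv ℝ (gradient (f i)) u) v, v⟫ ≤ L i * ‖v‖ ^ 2)
    (wstar : Fin T → EuclideanSpace ℝ (Fin d))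
    (m : ℕ → Fin T → Fin T → ℝ)
    (hm : ∀ t i j, 0 ≤ m t i j) (hrow : ∀ t i, ∑ j, m t i j = 1)
    (σ α : ℝ) (hσ : 0 < σ) (hα0 : 0 < α)
    (hne : Finset.univ.Nonempty (α := Fin T))
    (w : ℕ → Fin T → EuclideanSpace ℝ (Fin d))
    (hiter : ∀ t i, w (t + 1) i =
      (1 - α * σ) • w t i + (α * σ) • (∑ j, m t i j • w t j) -
        α • gradient (f i) (w t i))
    (t : ℕ) :
    (Finset.univ.sup' hne fun i => ‖w (t + 1) i - wstar i‖) ≤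
      ((Finset.univ.sup' hne fun i =>
          max |1 - α * σ - α * ξ i| |1 - α * σ - α * L i|) + α * σ) *
        (Finset.univ.sup' hne fun i => ‖w t i - wstar i‖) +
      2 * α * σ * (Finset.univ.sup' hne fun i => ‖wstar i‖) +
      α * (Finset.univ.sup' hne fun i => ‖gradient (f i) (wstar i)‖) :=
  stmt16_general f hC2 ξ L hbound wstar m hm hrow σ α hσ hα0 hne w hiter t
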